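/- Suppose z ∈ W^{IJ}, α ∈ Π_I with z⁻¹(α) ∈ Π_J, s = s_α, and λ ∈ X with d = ⟨λ, α̌⟩ ≥ 0. Then there exist polynomials p₀, p₁, …, p_{⌊d/2⌋} in ℤ[v²], depending only on d (and not otherwise on λ), such that C_{w_I} θ_{s(λ)} T_z C_{w_J} = C_{w_I} ( Σ_{j=0}^{⌊d/2⌋} p_j θ_{λ−jα} ) T_z C_{w_J} in H. -/

import Mathlib

noncomputable section
open scoped Classical

/-- The coefficient ring `A = ℤ[v, v⁻¹]`. -/
abbrev A : Type := LaurentPolynomial ℤ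

/-- The variable `v ∈ A`. -/
abbrev v : A := LaurentPolynomial.T 1

/-- The multiplicative group structure on `AddAut A` (composition), as in the older Mathlib,
where `AddAut A` was a `Group`; current Mathlib makes it an `AddGroup` instead. -/
instance AddAut.group (A : Type*) [Add A] : Group (AddAut A) where
  mul g h := AddEquiv.trans h g
  one := AddEquiv.refl _
  inv := AddEquiv.symm
  mul_assoc _ _ _ := rfl
  one_mul _ := rfl
  mul_one _ := rfl
  inv_mul_cancel := AddEquiv.self_trans_symm

/-- A context consisting of a finitely generated free abelian group `X` containing a
reduced crystallographic root system with base `Pi`, together with its Weyl group `W`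
acting faithfully on `X`, simple reflections `sref α` for `α ∈ Pi`, the coroot pairing
`pair lam α = ⟨lam, α̌⟩`, the set `S` of simple reflections, and the length function. -/
structure WeylCtx where
  X : Type
  [addX : AddCommGroup X]
  [freeX : Module.Free ℤ X]
  [finX : Module.Finite ℤ X]
  W : Type
  [grpW : Group W]
  [finW : Fintype W]
  act : W →* AddAut X
  act_inj : Function.Injective act
  Pi : Set X
  pair : X → X → ℤ
  sref : X → W
  S : Set W
  S_eq : S = sref '' Pi
  S_gen : Subgroup.closure S = ⊤
  sref_apply : ∀ α ∈ Pi, ∀ lam : X, act (sref α) lam = lam - pair lam α • α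
  len : W → ℕ
  len_spec : ∀ w, len w =
    sInf {n | ∃ l : List W, (∀ s ∈ l, s ∈ S) ∧ l.prod = w ∧ l.length = n}

attribute [instance] WeylCtx.addX WeylCtx.freeX WeylCtx.finX WeylCtx.grpW WeylCtx.finW

namespace WeylCtx

variable (C : WeylCtx)

/-- The action of `W` on `Multiplicative X`. -/
def phi : C.W →* MulAut (Multiplicative C.X) where
  toFun w := AddEquiv.toMultiplicative (C.act w)
  map_one' := by
    ext x
    simp only [map_one]
    rfl
  map_mul' w w' := by
    ext x
    simp only [map_mul]
    rfl

/-- The extended affine Weyl group `W_ext = X ⋊ W`. -/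
abbrev Wext := Multiplicative C.X ⋊[C.phi] C.W

/-- The translation `t_λ ∈ W_ext` for `λ ∈ X`. -/
def t (lam : C.X) : C.Wext := SemidirectProduct.inl (Multiplicative.ofAdd lam)

/-- The canonical embedding of `W` into `W_ext`. -/
def of (w : C.W) : C.Wext := SemidirectProduct.inr w

/-- The standard parabolic subgroup `W_I` generated by `I ⊆ S`. -/
def WI (I : Set C.W) : Subgroup C.W := Subgroup.closure I

/-- `Π_I = {α ∈ Π : s_α ∈ I}`. -/
def PiI (I : Set C.W) : Set C.X := {α | α ∈ C.Pi ∧ C.sref α ∈ I}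

/-- `X⁺_I = {λ ∈ X : ⟨λ, α̌⟩ ≥ 0 for all α ∈ Π_I}`. -/
def XplusI (I : Set C.W) : Set C.X := {lam | ∀ α ∈ C.PiI I, 0 ≤ C.pair lam α}

/-- `Π_{I ∩ ᶻJ} = Π_I ∩ z(Π_J)` for `z ∈ W`. -/
def PiZ (I J : Set C.W) (z : C.W) : Set C.X := C.PiI I ∩ (⇑(C.act z) '' C.PiI J)

/-- `X⁺_z = X⁺_{I ∩ ᶻJ}`. -/
def XplusZ (I J : Set C.W) (z : C.W) : Set C.X := {lam | ∀ α ∈ C.PiZ I J z, 0 ≤ C.pair lam α}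

/-- The `(W_I, W_J)`-double coset of `w` in `W`. -/
def dcos (I J : Set C.W) (w : C.W) : Set C.W :=
  {x | ∃ a ∈ C.WI I, ∃ b ∈ C.WI J, x = a * w * b}

/-- `W^{IJ}`: the set of minimal length `(W_I, W_J)`-double coset representatives in `W`. -/
def WIJ (I J : Set C.W) : Set C.W := {z | ∀ x ∈ C.dcos I J z, C.len z ≤ C.len x}

/-- The `(W_I, W_J)`-double coset of `x` in `W_ext`. -/
def dcosE (I J : Set C.W) (x : C.Wext) : Set C.Wext :=
  {y | ∃ a ∈ C.WI I, ∃ b ∈ C.WI J, y = C.of a * x * C.of b}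

/-- The set of reflections of `(W, S)`. -/
def refl : Set C.W := {t | ∃ s ∈ C.S, ∃ w : C.W, t = w * s * w⁻¹}

/-- The Bruhat order on `W`. -/
def ble : C.W → C.W → Prop :=
  Relation.ReflTransGen (fun x y => (∃ t ∈ C.refl, y = x * t) ∧ C.len x < C.len y)

/-- `w` is the longest element of `W_I`. -/
def IsLongest (I : Set C.W) (w : C.W) : Prop :=
  w ∈ C.WI I ∧ ∀ y ∈ C.WI I, C.len y ≤ C.len w

end WeylCtx

/-- Extension of the length function and Bruhat order from `W_af` to `W_ext`. -/
structure ExtCtx (C : WeylCtx) where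
  lenE : C.Wext → ℕ
  lenE_of : ∀ w : C.W, lenE (C.of w) = C.len w
  ltE : C.Wext → C.Wext → Prop
  ltE_trans : ∀ {x y z : C.Wext}, ltE x y → ltE y z → ltE x z
  ltE_len : ∀ {x y : C.Wext}, ltE x y → lenE x < lenE y

/-- `m` is a minimal length element of the `(W_I, W_J)`-double coset of `x` in `W_ext`. -/
def IsMinRep (C : WeylCtx) (E : ExtCtx C) (I J : Set C.W) (x m : C.Wext) : Prop :=
  m ∈ C.dcosE I J x ∧ ∀ y ∈ C.dcosE I J x, E.lenE m ≤ E.lenE y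
/-- The extended affine Hecke algebra `H` of the context, together with its standard
basis `{T_x : x ∈ W_ext}`, Bernstein generators `θ_λ`, the bar involution, and the
Kazhdan–Lusztig basis elements `KL x = C'_x`. -/
structure HeckeCtx (C : WeylCtx) (E : ExtCtx C) where
  H : Type
  [ringH : Ring H]
  [algH : Algebra A H]
  T : C.Wext → H
  theta : C.X → H
  bT : Module.Basis C.Wext A H
  bT_eq : ∀ x, bT x = T x
  T_one : T 1 = 1
  T_mul : ∀ x y, E.lenE (x * y) = E.lenE x + E.lenE y → T x * T y = T (x * y)
  T_sq : ∀ s ∈ C.S,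
    T (C.of s) * T (C.of s) = (v ^ 2 : A) • (1 : H) + (v ^ 2 - 1 : A) • T (C.of s)
  theta_mul : ∀ lam mu, theta lam * theta mu = theta (lam + mu)
  theta_zero : theta 0 = 1
  bernstein : ∀ α ∈ C.Pi, ∀ lam : C.X,
    (theta lam * T (C.of (C.sref α)) - T (C.of (C.sref α)) * theta (C.act (C.sref α) lam)) *
        (1 - theta (-α))
      = (v ^ 2 - 1 : A) • (theta lam - theta (C.act (C.sref α) lam))
  bernstein_mem : ∀ α ∈ C.Pi, ∀ lam : C.X,
    theta lam * T (C.of (C.sref α)) - T (C.of (C.sref α)) * theta (C.act (C.sref α) lam)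
      ∈ Submodule.span A (Set.range theta)
  bB : Module.Basis (C.X × C.W) A H
  bB_eq : ∀ p, bB p = theta p.1 * T (C.of p.2)
  Tu : C.Wext → Hˣ
  Tu_eq : ∀ x, (Tu x : H) = T x
  bar : H ≃+* H
  bar_T : ∀ x : C.Wext, bar (T x) = (((Tu x⁻¹)⁻¹ : Hˣ) : H)
  bar_smul : ∀ (n : ℤ) (h : H),
    bar ((LaurentPolynomial.T n : A) • h) = (LaurentPolynomial.T (-n) : A) • bar h
  KL : C.Wext → H
  Pkl : C.Wext → C.Wext → Polynomial ℤ
  KL_bar : ∀ x, bar (KL x) = KL x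
  KL_coeff_self : ∀ x, bT.repr (KL x) x = LaurentPolynomial.T (-(E.lenE x : ℤ))
  KL_coeff_lt : ∀ x y, E.ltE y x →
    bT.repr (KL x) y = LaurentPolynomial.T (-(E.lenE x : ℤ)) * (Pkl y x).toLaurent
  KL_support : ∀ x y, bT.repr (KL x) y ≠ 0 → y = x ∨ E.ltE y x
  Pkl_deg : ∀ x y, E.ltE y x →
    (Pkl y x).degree ≤ ((E.lenE x - E.lenE y - 1 : ℕ) : WithBot ℕ)

attribute [instance] HeckeCtx.ringH HeckeCtx.algH

namespace HeckeCtx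

variable {C : WeylCtx} {E : ExtCtx C} (HC : HeckeCtx C E)

/-- The Kazhdan–Lusztig element
`C_{w_I} = (-v)^{ℓ(w_I)} ∑_{y ∈ W_I} (-1)^{ℓ(y)} v^{-2ℓ(y)} T_y`. -/
def Cw (I : Set C.W) (wI : C.W) : HC.H :=
  ((-v) ^ C.len wI : A) •
    ∑ y ∈ Finset.univ.filter (fun y => y ∈ C.WI I),
      ((-1 : A) ^ C.len y * LaurentPolynomial.T (-(2 * (C.len y : ℤ)))) • HC.T (C.of y)

/-- The map `χ^{IJ} : H → H^{IJ}`, `h ↦ C_{w_I} h C_{w_J}`. -/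
def chi (I J : Set C.W) (wI wJ : C.W) (h : HC.H) : HC.H :=
  HC.Cw I wI * h * HC.Cw J wJ

/-- `H^{IJ} = C_{w_I} H C_{w_J}` as an `A`-submodule of `H`. -/
def HIJ (I J : Set C.W) (wI wJ : C.W) : Submodule A HC.H :=
  LinearMap.range
    ((LinearMap.mulLeft A (HC.Cw I wI)).comp (LinearMap.mulRight A (HC.Cw J wJ)))

end HeckeCtx

/-- The index set of pairs `(λ, z)` with `z ∈ W^{IJ}` and `λ ∈ X⁺_z`. -/
def Dtype (C : WeylCtx) (I J : Set C.W) : Type :=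
  {p : C.X × C.W // p.2 ∈ C.WIJ I J ∧ p.1 ∈ C.XplusZ I J p.2}
section Aux

open LaurentPolynomial

lemma A_T_ne {m n : ℤ} (h : m ≠ n) : (T m : A) ≠ T n := by
  simp only [LaurentPolynomial.T]
  intro hc
  rcases (Finsupp.single_eq_single_iff m n (1 : ℤ) 1).mp (congrArg AddMonoidAlgebra.coeff hc) with ⟨h1, _⟩ | ⟨h1, _⟩
  · exact h h1
  · exact one_ne_zero h1

/-- Evaluation `v ↦ 2` from `A` to `ℚ`. -/
def Aev : A →ₐ[ℤ] ℚ := (AddMonoidAlgebra.lift ℤ ℚ ℤ)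
  { toFun := fun n => (2 : ℚ) ^ (Multiplicative.toAdd n)
    map_one' := by simp
    map_mul' := fun a b => by
      simp only [toAdd_mul]
      exact zpow_add₀ (by norm_num) _ _ }

lemma Aev_T (n : ℤ) : Aev (T n) = 2 ^ n := by
  simp only [Aev, LaurentPolynomial.T]
  rw [AddMonoidAlgebra.lift_single]
  simp

lemma A_key_ne : (v ^ 2 + (v ^ 2 - 1) - 1 : A) ≠ 0 := by
  intro hc
  have h2 := congrArg Aev hc
  simp only [map_sub, map_add, map_one, map_pow, map_zero, Aev_T] at h2
  norm_num at h2

end Aux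
section Grp

open LaurentPolynomial

variable {C : WeylCtx} {E : ExtCtx C}

lemma of_mul (a b : C.W) : C.of (a * b) = C.of a * C.of b := map_mul _ _ _

lemma of_one : C.of (1 : C.W) = 1 := map_one SemidirectProduct.inr

lemma act_mul_apply (a b : C.W) (x : C.X) : C.act (a * b) x = C.act a (C.act b x) := by
  rw [map_mul]; rfl

lemma act_one_apply (x : C.X) : C.act (1 : C.W) x = x := by rw [map_one]; rfl

lemma act_inv_cancel (a : C.W) (x : C.X) : C.act a⁻¹ (C.act a x) = x := by
  rw [← act_mul_apply, inv_mul_cancel, act_one_apply]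

lemma act_cancel_inv (a : C.W) (x : C.X) : C.act a (C.act a⁻¹ x) = x := by
  rw [← act_mul_apply, mul_inv_cancel, act_one_apply]

/-- `H` is a faithful `A`-module in the weak sense needed below. -/
lemma H_smul_one_inj (HC : HeckeCtx C E) {a : A} (ha : a • (1 : HC.H) = 0) : a = 0 := by
  have h1 : (1 : HC.H) = HC.bT 1 := by rw [HC.bT_eq, HC.T_one]
  rw [h1] at ha
  have h2 := congrArg (fun h => HC.bT.repr h 1) ha
  simpa using h2

lemma s_ne_one (HC : HeckeCtx C E) {s : C.W} (hs : s ∈ C.S) : s ≠ 1 := by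
  intro h1
  have h2 := HC.T_sq s hs
  rw [h1, of_one, HC.T_one, mul_one] at h2
  have h3 : ((v ^ 2 : A) + (v ^ 2 - 1) - 1) • (1 : HC.H) = 0 := by
    rw [sub_smul, add_smul, ← h2, one_smul, sub_self]
  exact A_key_ne (H_smul_one_inj HC h3)

lemma alpha_ne_zero (HC : HeckeCtx C E) {α : C.X} (hα : α ∈ C.Pi) : α ≠ 0 := by
  intro h0
  have hs : C.sref α ∈ C.S := C.S_eq ▸ ⟨α, hα, rfl⟩
  apply s_ne_one HC hs
  apply C.act_inj
  ext lam
  show C.act (C.sref α) lam = C.act 1 lam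
  rw [C.sref_apply α hα lam, act_one_apply, h0, smul_zero, sub_zero]

lemma pair_add (HC : HeckeCtx C E) {α : C.X} (hα : α ∈ C.Pi) (lam mu : C.X) :
    C.pair (lam + mu) α = C.pair lam α + C.pair mu α := by
  have h := C.sref_apply α hα
  have h2 : C.act (C.sref α) (lam + mu) = C.act (C.sref α) lam + C.act (C.sref α) mu :=
    map_add _ _ _
  rw [h, h, h, sub_add_sub_comm] at h2
  have h3 := sub_right_injective h2
  rw [← add_smul] at h3
  exact smul_left_injective ℤ (alpha_ne_zero HC hα) h3

/-- The pairing with `α̌` as an additive homomorphism. -/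
def pairHom (HC : HeckeCtx C E) (α : C.X) (hα : α ∈ C.Pi) : C.X →+ ℤ :=
  AddMonoidHom.mk' (fun lam => C.pair lam α) (pair_add HC hα)

lemma pair_zsmul (HC : HeckeCtx C E) {α : C.X} (hα : α ∈ C.Pi) (n : ℤ) (lam : C.X) :
    C.pair (n • lam) α = n * C.pair lam α := by
  have h := map_zsmul (pairHom HC α hα) n lam
  simpa [pairHom, smul_eq_mul] using h

lemma pair_sub (HC : HeckeCtx C E) {α : C.X} (hα : α ∈ C.Pi) (lam mu : C.X) :
    C.pair (lam - mu) α = C.pair lam α - C.pair mu α := by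
  have h := map_sub (pairHom HC α hα) lam mu
  simpa [pairHom] using h

end Grp
section Refl

variable {C : WeylCtx} {E : ExtCtx C}

/-- The auxiliary integer sequence controlling powers of a pre-reflection. -/
def aseq (c : ℤ) : ℕ → ℤ
  | 0 => 0
  | n + 1 => 1 + (1 - c) * aseq c n

lemma act_sref_pow (HC : HeckeCtx C E) {α : C.X} (hα : α ∈ C.Pi) (n : ℕ) (lam : C.X) :
    C.act (C.sref α ^ n) lam = lam - (aseq (C.pair α α) n * C.pair lam α) • α := by
  induction n generalizing lam with
  | zero => simp [aseq, act_one_apply]; rfl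
  | succ n ih =>
    rw [pow_succ', act_mul_apply, ih lam, C.sref_apply α hα, pair_sub HC hα,
      pair_zsmul HC hα, sub_sub, ← add_smul]
    congr 2
    simp only [aseq]
    ring

lemma pair_self (HC : HeckeCtx C E) {α : C.X} (hα : α ∈ C.Pi) : C.pair α α = 2 := by
  set c := C.pair α α with hc
  set s := C.sref α with hsdef
  set N := orderOf s with hN
  have hs : s ∈ C.S := C.S_eq ▸ ⟨α, hα, rfl⟩
  have hN1 : s ^ N = 1 := pow_orderOf_eq_one s
  have hNpos : 0 < N := orderOf_pos s
  have hlam : ∃ lam, C.pair lam α ≠ 0 := by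
    by_contra h; push_neg at h
    apply s_ne_one HC hs; apply C.act_inj; ext lam
    show C.act s lam = C.act 1 lam
    rw [hsdef, C.sref_apply α hα lam, act_one_apply, h lam, zero_smul, sub_zero]
  obtain ⟨lam0, hlam0⟩ := hlam
  have h1 := act_sref_pow HC hα N lam0
  rw [hN1, act_one_apply] at h1
  have h2 : (aseq c N * C.pair lam0 α) • α = 0 := sub_eq_self.mp h1.symm
  have h3 : aseq c N = 0 := by
    rcases smul_eq_zero.mp h2 with h | h
    · rcases mul_eq_zero.mp h with h | h
      · exact h
      · exact absurd h hlam0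
    · exact absurd h (alpha_ne_zero HC hα)
  by_contra hne
  obtain ⟨m, hm⟩ : ∃ m, N = m + 1 := ⟨N - 1, by omega⟩
  rcases (by omega : c ≤ 1 ∨ 3 ≤ c) with hcle | hcge
  · have key : ∀ n : ℕ, 1 ≤ aseq c (n + 1) := by
      intro n; induction n with
      | zero => simp [aseq]
      | succ n ih =>
        have h4 : aseq c (n + 1 + 1) = 1 + (1 - c) * aseq c (n + 1) := rfl
        have h5 : 0 ≤ (1 - c) * aseq c (n + 1) :=
          mul_nonneg (by omega) (by omega)
        omega
    have := key m; rw [← hm] at this; omega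
  · have key : ∀ n : ℕ, 1 ≤ |aseq c (n + 1)| := by
      intro n; induction n with
      | zero => simp [aseq]
      | succ n ih =>
        have h4 : aseq c (n + 1 + 1) = 1 + (1 - c) * aseq c (n + 1) := rfl
        set a := aseq c (n + 1) with ha
        have h6 : 1 ≤ a ∨ a ≤ -1 := by
          rcases abs_cases a with ⟨he, _⟩ | ⟨he, _⟩ <;> omega
        have h7 : 1 + (1 - c) * a ≤ -1 ∨ 1 ≤ 1 + (1 - c) * a := by
          rcases h6 with h | h
          · left; nlinarith
          · right; nlinarith
        rw [h4]
        rcases h7 with h | h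
        · rw [abs_of_nonpos (by omega)]; omega
        · rw [abs_of_nonneg (by omega)]; omega
    have := key m; rw [← hm] at this
    rw [h3] at this; simp at this

lemma sref_mul_self (HC : HeckeCtx C E) {α : C.X} (hα : α ∈ C.Pi) :
    C.sref α * C.sref α = 1 := by
  apply C.act_inj; apply AddEquiv.ext; intro lam
  show C.act (C.sref α * C.sref α) lam = C.act 1 lam
  rw [act_mul_apply, C.sref_apply α hα lam, C.sref_apply α hα, act_one_apply,
    pair_sub HC hα, pair_zsmul HC hα, pair_self HC hα]
  have : C.pair lam α - C.pair lam α * 2 = - C.pair lam α := by ring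
  rw [this, neg_smul, sub_neg_eq_add, sub_add_cancel]

lemma s_mul_self (HC : HeckeCtx C E) {s : C.W} (hs : s ∈ C.S) : s * s = 1 := by
  have h : s ∈ C.sref '' C.Pi := C.S_eq ▸ hs
  obtain ⟨α, hα, rfl⟩ := h
  exact sref_mul_self HC hα

end Refl
section Sign

variable {C : WeylCtx} {E : ExtCtx C}

/-- The determinant of the action of `w` on `X`. -/
def detW (C : WeylCtx) (w : C.W) : ℤ :=
  LinearMap.det ((C.act w).toAddMonoidHom.toIntLinearMap)

lemma detW_mul (w w' : C.W) : detW C (w * w') = detW C w * detW C w' := by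
  unfold detW
  rw [← LinearMap.det_comp]
  congr 1
  apply LinearMap.ext; intro x
  exact congrArg (fun (f : AddAut C.X) => f x) (map_mul C.act w w')

lemma detW_one : detW C (1 : C.W) = 1 := by
  unfold detW
  have h : ((C.act 1).toAddMonoidHom.toIntLinearMap : C.X →ₗ[ℤ] C.X) = LinearMap.id := by
    apply LinearMap.ext; intro x
    exact act_one_apply x
  rw [h, LinearMap.det_id]

lemma detW_sref (HC : HeckeCtx C E) {α : C.X} (hα : α ∈ C.Pi) : detW C (C.sref α) = -1 := by
  classical
  unfold detW
  set b := Module.Free.chooseBasis ℤ C.X with hb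
  rw [← LinearMap.det_toMatrix b]
  have hmat : LinearMap.toMatrix b b (C.act (C.sref α)).toAddMonoidHom.toIntLinearMap =
      1 + Matrix.replicateCol Unit (fun i => -(b.repr α i)) *
        Matrix.replicateRow Unit (fun j => C.pair (b j) α) := by
    apply Matrix.ext; intro i j
    rw [LinearMap.toMatrix_apply]
    have happ : (C.act (C.sref α)).toAddMonoidHom.toIntLinearMap (b j)
        = b j - C.pair (b j) α • α := C.sref_apply α hα (b j)
    rw [happ, map_sub, map_zsmul]
    simp only [Matrix.add_apply, Matrix.mul_apply, Matrix.replicateCol_apply, Matrix.replicateRow_apply,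
      Finset.univ_unique, Finset.sum_const, Finset.card_singleton, one_smul,
      Finsupp.sub_apply, Finsupp.smul_apply, Module.Basis.repr_self, Matrix.one_apply,
      Finsupp.single_apply, smul_eq_mul]
    rcases eq_or_ne i j with hij | hij
    · subst hij; simp; ring
    · simp [hij, Ne.symm hij]; ring
  rw [hmat, Matrix.det_one_add_replicateCol_mul_replicateRow]
  have h1 : ∀ x : C.X, C.pair x α = ∑ i, b.repr x i * C.pair (b i) α := by
    intro x
    conv_lhs => rw [← Module.Basis.sum_repr b x]
    rw [show C.pair (∑ i, b.repr x i • b i) α = pairHom HC α hα (∑ i, b.repr x i • b i)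
      from rfl]
    rw [map_sum]
    apply Finset.sum_congr rfl; intro i _
    rw [map_zsmul]
    simp [pairHom, smul_eq_mul]
  have h2 : (dotProduct (fun j => C.pair (b j) α) fun i => -(b.repr α i)) =
      - C.pair α α := by
    rw [h1 α]
    unfold dotProduct
    rw [← Finset.sum_neg_distrib]
    apply Finset.sum_congr rfl; intro i _
    ring
  rw [h2, pair_self HC hα]
  norm_num

end Sign
section Len

variable {C : WeylCtx} {E : ExtCtx C}

lemma detW_s (HC : HeckeCtx C E) {s : C.W} (hs : s ∈ C.S) : detW C s = -1 := by
  have h : s ∈ C.sref '' C.Pi := C.S_eq ▸ hs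
  obtain ⟨α, hα, rfl⟩ := h
  exact detW_sref HC hα

lemma s_inv_eq (HC : HeckeCtx C E) {s : C.W} (hs : s ∈ C.S) : s⁻¹ = s :=
  inv_eq_of_mul_eq_one_left (s_mul_self HC hs)

lemma list_prod_inv (HC : HeckeCtx C E) :
    ∀ l : List C.W, (∀ x ∈ l, x ∈ C.S) → (l.prod)⁻¹ = l.reverse.prod := by
  intro l
  induction l with
  | nil => simp
  | cons a l ih =>
    intro h
    rw [List.prod_cons, mul_inv_rev, ih (fun x hx => h x (List.mem_cons_of_mem a hx)),
      s_inv_eq HC (h a List.mem_cons_self), List.reverse_cons, List.prod_append,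
      List.prod_singleton]

lemma exists_word (HC : HeckeCtx C E) (w : C.W) :
    ∃ l : List C.W, (∀ x ∈ l, x ∈ C.S) ∧ l.prod = w := by
  have hw : w ∈ Subgroup.closure C.S := by rw [C.S_gen]; exact Subgroup.mem_top w
  induction hw using Subgroup.closure_induction with
  | mem x hx => exact ⟨[x], by simp [hx]⟩
  | one => exact ⟨[], by simp⟩
  | mul x y hx hy ihx ihy =>
    obtain ⟨l1, h1, h1p⟩ := ihx
    obtain ⟨l2, h2, h2p⟩ := ihy
    refine ⟨l1 ++ l2, ?_, by rw [List.prod_append, h1p, h2p]⟩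
    intro t ht
    rcases List.mem_append.mp ht with ht | ht
    · exact h1 t ht
    · exact h2 t ht
  | inv x hx ihx =>
    obtain ⟨l, h1, h1p⟩ := ihx
    exact ⟨l.reverse, fun t ht => h1 t (List.mem_reverse.mp ht),
      by rw [← list_prod_inv HC l h1, h1p]⟩

lemma len_le (w : C.W) (l : List C.W) (hl : ∀ x ∈ l, x ∈ C.S) (hp : l.prod = w) :
    C.len w ≤ l.length := by
  rw [C.len_spec]; exact Nat.sInf_le ⟨l, hl, hp, rfl⟩

lemma exists_min_word (HC : HeckeCtx C E) (w : C.W) :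
    ∃ l : List C.W, (∀ x ∈ l, x ∈ C.S) ∧ l.prod = w ∧ l.length = C.len w := by
  have hne : {n | ∃ l : List C.W, (∀ s ∈ l, s ∈ C.S) ∧ l.prod = w ∧ l.length = n}.Nonempty := by
    obtain ⟨l, h1, h2⟩ := exists_word HC w
    exact ⟨l.length, l, h1, h2, rfl⟩
  have h := Nat.sInf_mem hne
  rw [← C.len_spec w] at h
  exact h

lemma detW_len (HC : HeckeCtx C E) (w : C.W) : detW C w = (-1) ^ (C.len w) := by
  obtain ⟨l, h1, h2, h3⟩ := exists_min_word HC w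
  rw [← h3, ← h2]
  clear h2 h3
  induction l with
  | nil => simpa using detW_one
  | cons a l ih =>
    rw [List.prod_cons, detW_mul, detW_s HC (h1 a List.mem_cons_self),
      ih (fun x hx => h1 x (List.mem_cons_of_mem a hx)), List.length_cons, pow_succ]
    ring

lemma len_one : C.len (1 : C.W) = 0 :=
  Nat.le_zero.mp (len_le 1 [] (by simp) rfl)

lemma len_s (HC : HeckeCtx C E) {s : C.W} (hs : s ∈ C.S) : C.len s = 1 := by
  have hle : C.len s ≤ 1 := by
    have := len_le s [s] (by simp [hs]) (List.prod_singleton)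
    simpa using this
  have hne : C.len s ≠ 0 := by
    intro h0
    obtain ⟨l, h1, h2, h3⟩ := exists_min_word HC s
    rw [h0] at h3
    rw [List.length_eq_zero_iff.mp h3] at h2
    exact s_ne_one HC hs h2.symm
  omega

lemma len_mul_s_ne (HC : HeckeCtx C E) (w : C.W) {s : C.W} (hs : s ∈ C.S) :
    C.len (w * s) ≠ C.len w := by
  intro h
  have h1 := detW_len HC (w * s)
  rw [detW_mul, detW_len HC w, detW_s HC hs, h] at h1
  have h2 : ((-1 : ℤ)) ^ (C.len w) ≠ 0 := pow_ne_zero _ (by norm_num)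
  have h3 : (2 : ℤ) * ((-1) ^ (C.len w)) = 0 := by linarith
  rcases mul_eq_zero.mp h3 with h4 | h4
  · norm_num at h4
  · exact h2 h4

lemma len_s_mul_ne (HC : HeckeCtx C E) (w : C.W) {s : C.W} (hs : s ∈ C.S) :
    C.len (s * w) ≠ C.len w := by
  intro h
  have h1 := detW_len HC (s * w)
  rw [detW_mul, detW_len HC w, detW_s HC hs, h] at h1
  have h2 : ((-1 : ℤ)) ^ (C.len w) ≠ 0 := pow_ne_zero _ (by norm_num)
  have h3 : (2 : ℤ) * ((-1) ^ (C.len w)) = 0 := by linarith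
  rcases mul_eq_zero.mp h3 with h4 | h4
  · norm_num at h4
  · exact h2 h4

lemma len_mul_s_le (HC : HeckeCtx C E) (w : C.W) {s : C.W} (hs : s ∈ C.S) :
    C.len (w * s) ≤ C.len w + 1 := by
  obtain ⟨l, h1, h2, h3⟩ := exists_min_word HC w
  have h4 := len_le (w * s) (l ++ [s]) ?_ ?_
  · simpa [h3] using h4
  · intro x hx
    rcases List.mem_append.mp hx with hx | hx
    · exact h1 x hx
    · simp at hx; rw [hx]; exact hs
  · rw [List.prod_append, h2, List.prod_singleton]

lemma len_s_mul_le (HC : HeckeCtx C E) (w : C.W) {s : C.W} (hs : s ∈ C.S) :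
    C.len (s * w) ≤ C.len w + 1 := by
  obtain ⟨l, h1, h2, h3⟩ := exists_min_word HC w
  have h4 := len_le (s * w) (s :: l) ?_ ?_
  · simpa [h3] using h4
  · intro x hx
    rcases List.mem_cons.mp hx with hx | hx
    · rw [hx]; exact hs
    · exact h1 x hx
  · rw [List.prod_cons, h2]

lemma len_mul_s_or (HC : HeckeCtx C E) (w : C.W) {s : C.W} (hs : s ∈ C.S) :
    C.len (w * s) = C.len w + 1 ∨ C.len w = C.len (w * s) + 1 := by
  have h1 := len_mul_s_ne HC w hs
  have h2 := len_mul_s_le HC w hs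
  have h3 : C.len w ≤ C.len (w * s) + 1 := by
    have h := len_mul_s_le HC (w * s) hs
    rw [mul_assoc, s_mul_self HC hs, mul_one] at h
    exact h
  omega

lemma len_s_mul_or (HC : HeckeCtx C E) (w : C.W) {s : C.W} (hs : s ∈ C.S) :
    C.len (s * w) = C.len w + 1 ∨ C.len w = C.len (s * w) + 1 := by
  have h1 := len_s_mul_ne HC w hs
  have h2 := len_s_mul_le HC w hs
  have h3 : C.len w ≤ C.len (s * w) + 1 := by
    have h := len_s_mul_le HC (s * w) hs
    rw [← mul_assoc, s_mul_self HC hs, one_mul] at h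
    exact h
  omega

end Len
section TMul

open LaurentPolynomial

variable {C : WeylCtx} {E : ExtCtx C}

lemma A_vsq : (v ^ 2 : A) = T 2 := by
  rw [LaurentPolynomial.T_pow]; norm_num

lemma T_of_mul_of (HC : HeckeCtx C E) (a b : C.W) (h : C.len (a * b) = C.len a + C.len b) :
    HC.T (C.of a) * HC.T (C.of b) = HC.T (C.of (a * b)) := by
  rw [of_mul]
  apply HC.T_mul
  rw [← of_mul, E.lenE_of, E.lenE_of, E.lenE_of, h]

lemma T_mul_s_up (HC : HeckeCtx C E) {y s : C.W} (hs : s ∈ C.S)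
    (h : C.len (y * s) = C.len y + 1) :
    HC.T (C.of y) * HC.T (C.of s) = HC.T (C.of (y * s)) :=
  T_of_mul_of HC y s (by rw [h, len_s HC hs])

lemma T_s_mul_up (HC : HeckeCtx C E) {y s : C.W} (hs : s ∈ C.S)
    (h : C.len (s * y) = C.len y + 1) :
    HC.T (C.of s) * HC.T (C.of y) = HC.T (C.of (s * y)) :=
  T_of_mul_of HC s y (by rw [h, len_s HC hs]; ring)

lemma T_mul_s_down (HC : HeckeCtx C E) {y s : C.W} (hs : s ∈ C.S)
    (h : C.len y = C.len (y * s) + 1) :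
    HC.T (C.of y) * HC.T (C.of s) =
      (v ^ 2 : A) • HC.T (C.of (y * s)) + ((v ^ 2 - 1 : A)) • HC.T (C.of y) := by
  have hy : (y * s) * s = y := by rw [mul_assoc, s_mul_self HC hs, mul_one]
  have h2 : C.len ((y * s) * s) = C.len (y * s) + 1 := by rw [hy, h]
  have h3 : HC.T (C.of (y * s)) * HC.T (C.of s) = HC.T (C.of y) := by
    rw [T_mul_s_up HC hs h2, hy]
  calc HC.T (C.of y) * HC.T (C.of s)
      = HC.T (C.of (y * s)) * (HC.T (C.of s) * HC.T (C.of s)) := by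
        rw [← mul_assoc, h3]
    _ = HC.T (C.of (y * s)) * ((v ^ 2 : A) • (1 : HC.H) + (v ^ 2 - 1 : A) • HC.T (C.of s)) := by
        rw [HC.T_sq s hs]
    _ = (v ^ 2 : A) • HC.T (C.of (y * s)) + ((v ^ 2 - 1 : A)) • HC.T (C.of y) := by
        rw [mul_add, mul_smul_comm, mul_one, mul_smul_comm, h3]

lemma T_s_mul_down (HC : HeckeCtx C E) {y s : C.W} (hs : s ∈ C.S)
    (h : C.len y = C.len (s * y) + 1) :
    HC.T (C.of s) * HC.T (C.of y) =
      (v ^ 2 : A) • HC.T (C.of (s * y)) + ((v ^ 2 - 1 : A)) • HC.T (C.of y) := by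
  have hy : s * (s * y) = y := by rw [← mul_assoc, s_mul_self HC hs, one_mul]
  have h2 : C.len (s * (s * y)) = C.len (s * y) + 1 := by rw [hy, h]
  have h3 : HC.T (C.of s) * HC.T (C.of (s * y)) = HC.T (C.of y) := by
    rw [T_s_mul_up HC hs h2, hy]
  calc HC.T (C.of s) * HC.T (C.of y)
      = HC.T (C.of s) * (HC.T (C.of s) * HC.T (C.of (s * y))) := by rw [h3]
    _ = (HC.T (C.of s) * HC.T (C.of s)) * HC.T (C.of (s * y)) := by rw [mul_assoc]
    _ = ((v ^ 2 : A) • (1 : HC.H) + (v ^ 2 - 1 : A) • HC.T (C.of s)) * HC.T (C.of (s * y)) := by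
        rw [HC.T_sq s hs]
    _ = (v ^ 2 : A) • HC.T (C.of (s * y)) + ((v ^ 2 - 1 : A)) • HC.T (C.of y) := by
        rw [add_mul, smul_mul_assoc, one_mul, smul_mul_assoc, h3]

/-- The coefficient appearing in `C_{w_I}`. -/
def ccoef (C : WeylCtx) (y : C.W) : A :=
  (-1 : A) ^ C.len y * LaurentPolynomial.T (-(2 * (C.len y : ℤ)))

lemma ccoef_succ {y y' : C.W} (h : C.len y' = C.len y + 1) :
    ccoef C y' = -(ccoef C y * T (-2)) := by
  unfold ccoef
  rw [h, pow_succ]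
  have : (-(2 * ((C.len y + 1 : ℕ) : ℤ))) = (-(2 * (C.len y : ℤ))) + (-2) := by push_cast; ring
  rw [this, T_add]
  ring

lemma ccoef_vsq {y y' : C.W} (h : C.len y' = C.len y + 1) :
    ccoef C y' * (v ^ 2) = -(ccoef C y) := by
  rw [ccoef_succ h, A_vsq]
  have h2 : (T (-2) : A) * T 2 = 1 := by rw [← T_add]; norm_num
  calc -(ccoef C y * T (-2)) * T 2 = -(ccoef C y * (T (-2) * T 2)) := by ring
    _ = -(ccoef C y) := by rw [h2, mul_one]

/-- Abstract two-term cancellation identity. -/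
lemma pair_cancel {M : Type*} [AddCommGroup M] [Module A M] (a b : A) (x y : M)
    (h1 : b * v ^ 2 = -a) :
    a • x + a • y + b • ((v ^ 2 : A) • y + (v ^ 2 - 1 : A) • x) + b • x = 0 := by
  have hb2 : b * (v ^ 2 - 1) + b = -a := by ring_nf; ring_nf at h1; linear_combination h1
  rw [smul_add, smul_smul, smul_smul, h1]
  have hx : (b * (v ^ 2 - 1)) • x + b • x = (-a) • x := by rw [← add_smul, hb2]
  rw [neg_smul] at hx ⊢ 
  have : a • x + a • y + (-(a • y) + (b * (v ^ 2 - 1)) • x) + b • x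
      = a • x + ((b * (v ^ 2 - 1)) • x + b • x) := by abel
  rw [this, hx]
  abel

end TMul
section Absorb

open LaurentPolynomial

variable {C : WeylCtx} {E : ExtCtx C}

lemma Cw_mul_Ts (HC : HeckeCtx C E) (I : Set C.W) (wI : C.W) {s : C.W} (hs : s ∈ C.S)
    (hsI : s ∈ I) : HC.Cw I wI * HC.T (C.of s) = -(HC.Cw I wI) := by
  classical
  set F := Finset.univ.filter (fun y => y ∈ C.WI I) with hF
  set f : C.W → HC.H := fun y =>
    ccoef C y • (HC.T (C.of y) * HC.T (C.of s)) + ccoef C y • HC.T (C.of y) with hf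
  have aux : ∀ y : C.W, C.len (y * s) = C.len y + 1 → f y + f (y * s) = 0 := by
    intro y h
    have hys : (y * s) * s = y := by rw [mul_assoc, s_mul_self HC hs, mul_one]
    have hdown : C.len (y * s) = C.len ((y * s) * s) + 1 := by rw [hys, h]
    simp only [hf]
    rw [T_mul_s_up HC hs h, T_mul_s_down HC hs hdown, hys, ← add_assoc]
    exact pair_cancel _ _ _ _ (ccoef_vsq h)
  have main : ∑ y ∈ F, f y = 0 := by
    apply Finset.sum_involution (fun y _ => y * s)
    · intro y _
      rcases len_mul_s_or HC y hs with h | h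
      · exact aux y h
      · have hys : (y * s) * s = y := by rw [mul_assoc, s_mul_self HC hs, mul_one]
        have h2 : C.len ((y * s) * s) = C.len (y * s) + 1 := by rw [hys, h]
        have h3 := aux (y * s) h2
        rw [hys] at h3
        rwa [add_comm] at h3
    · intro y _ _ hcon
      exact s_ne_one HC hs (mul_eq_left.mp hcon)
    · intro y hy
      simp only [hF, Finset.mem_filter, Finset.mem_univ, true_and] at hy ⊢
      exact mul_mem hy (Subgroup.subset_closure hsI)
    · intro y _
      rw [mul_assoc, s_mul_self HC hs, mul_one]
  rw [Finset.sum_add_distrib] at main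
  have h2 : ∑ y ∈ F, ccoef C y • (HC.T (C.of y) * HC.T (C.of s))
      = -∑ y ∈ F, ccoef C y • HC.T (C.of y) :=
    eq_neg_of_add_eq_zero_left main
  show ((-v) ^ C.len wI : A) • (∑ y ∈ F, _ • HC.T (C.of y)) * HC.T (C.of s) = _
  rw [smul_mul_assoc, Finset.sum_mul]
  have h3 : ∀ y ∈ F, ((-1 : A) ^ C.len y * T (-(2 * (C.len y : ℤ)))) • HC.T (C.of y)
      * HC.T (C.of s) = ccoef C y • (HC.T (C.of y) * HC.T (C.of s)) := by
    intro y _; rw [smul_mul_assoc]; rfl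
  rw [Finset.sum_congr rfl h3, h2, smul_neg]
  rfl

lemma Ts_mul_Cw (HC : HeckeCtx C E) (J : Set C.W) (wJ : C.W) {s : C.W} (hs : s ∈ C.S)
    (hsJ : s ∈ J) : HC.T (C.of s) * HC.Cw J wJ = -(HC.Cw J wJ) := by
  classical
  set F := Finset.univ.filter (fun y => y ∈ C.WI J) with hF
  set f : C.W → HC.H := fun y =>
    ccoef C y • (HC.T (C.of s) * HC.T (C.of y)) + ccoef C y • HC.T (C.of y) with hf
  have aux : ∀ y : C.W, C.len (s * y) = C.len y + 1 → f y + f (s * y) = 0 := by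
    intro y h
    have hys : s * (s * y) = y := by rw [← mul_assoc, s_mul_self HC hs, one_mul]
    have hdown : C.len (s * y) = C.len (s * (s * y)) + 1 := by rw [hys, h]
    simp only [hf]
    rw [T_s_mul_up HC hs h, T_s_mul_down HC hs hdown, hys, ← add_assoc]
    exact pair_cancel _ _ _ _ (ccoef_vsq h)
  have main : ∑ y ∈ F, f y = 0 := by
    apply Finset.sum_involution (fun y _ => s * y)
    · intro y _
      rcases len_s_mul_or HC y hs with h | h
      · exact aux y h
      · have hys : s * (s * y) = y := by rw [← mul_assoc, s_mul_self HC hs, one_mul]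
        have h2 : C.len (s * (s * y)) = C.len (s * y) + 1 := by rw [hys, h]
        have h3 := aux (s * y) h2
        rw [hys] at h3
        rwa [add_comm] at h3
    · intro y _ _ hcon
      exact s_ne_one HC hs (mul_eq_right.mp hcon)
    · intro y hy
      simp only [hF, Finset.mem_filter, Finset.mem_univ, true_and] at hy ⊢
      exact mul_mem (Subgroup.subset_closure hsJ) hy
    · intro y _
      rw [← mul_assoc, s_mul_self HC hs, one_mul]
  rw [Finset.sum_add_distrib] at main
  have h2 : ∑ y ∈ F, ccoef C y • (HC.T (C.of s) * HC.T (C.of y))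
      = -∑ y ∈ F, ccoef C y • HC.T (C.of y) :=
    eq_neg_of_add_eq_zero_left main
  show HC.T (C.of s) * (((-v) ^ C.len wJ : A) • (∑ y ∈ F, _ • HC.T (C.of y))) = _
  rw [mul_smul_comm, Finset.mul_sum]
  have h3 : ∀ y ∈ F, HC.T (C.of s) * (((-1 : A) ^ C.len y * T (-(2 * (C.len y : ℤ))))
      • HC.T (C.of y)) = ccoef C y • (HC.T (C.of s) * HC.T (C.of y)) := by
    intro y _; rw [mul_smul_comm]; rfl
  rw [Finset.sum_congr rfl h3, h2, smul_neg]
  rfl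

end Absorb
section Conj

variable {C : WeylCtx} {E : ExtCtx C}

lemma conj_sref (HC : HeckeCtx C E) {z : C.W} {α : C.X} (hα : α ∈ C.Pi)
    (hβ : C.act z⁻¹ α ∈ C.Pi) : z⁻¹ * C.sref α * z = C.sref (C.act z⁻¹ α) := by
  set β := C.act z⁻¹ α with hbd
  set r : C.W := z⁻¹ * C.sref α * z with hr
  have hβα : C.act z β = α := act_cancel_inv z α
  have hr_app : ∀ lam : C.X, C.act r lam = lam - C.pair (C.act z lam) α • β := by
    intro lam
    rw [hr, act_mul_apply, act_mul_apply, C.sref_apply α hα, map_sub, map_zsmul,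
      act_inv_cancel z lam, ← hbd]
  have hφβ : C.pair (C.act z β) α = 2 := by rw [hβα]; exact pair_self HC hα
  have hψβ : C.pair β β = 2 := pair_self HC hβ
  set η : C.X → ℤ := fun lam => C.pair lam β - C.pair (C.act z lam) α with hη
  have hηβ : η β = 0 := by simp only [hη]; rw [hφβ, hψβ]; ring
  have hηadd : ∀ lam mu, η (lam + mu) = η lam + η mu := by
    intro lam mu
    simp only [hη]
    rw [pair_add HC hβ, map_add, pair_add HC hα]
    ring
  have hηsub : ∀ a b : C.X, η (a - b) = η a - η b := by
    intro a b
    have h := hηadd (a - b) b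
    rw [sub_add_cancel] at h
    omega
  have hηzsmul : ∀ (n : ℤ) (x : C.X), η (n • x) = n * η x := by
    intro n x
    have h := map_zsmul (AddMonoidHom.mk' η hηadd) n x
    simpa using h
  set u : C.W := C.sref β * r with hu
  have hu_app : ∀ lam : C.X, C.act u lam = lam - η lam • β := by
    intro lam
    rw [hu, act_mul_apply, hr_app lam, C.sref_apply β hβ, pair_sub HC hβ, pair_zsmul HC hβ,
      hψβ, sub_sub, ← add_smul]
    congr 2
    simp only [hη]
    ring
  have hu_pow : ∀ n : ℕ, ∀ lam : C.X, C.act (u ^ n) lam = lam - ((n : ℤ) * η lam) • β := by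
    intro n
    induction n with
    | zero => intro lam; simp [act_one_apply]; rfl
    | succ n ih =>
      intro lam
      rw [pow_succ, act_mul_apply, hu_app lam, ih]
      have h2 : η (lam - η lam • β) = η lam := by
        rw [hηsub, hηzsmul, hηβ]; ring
      rw [h2, sub_sub, ← add_smul]
      congr 2
      push_cast
      ring
  have hη0 : ∀ lam, η lam = 0 := by
    intro lam
    have h1 := hu_pow (orderOf u) lam
    rw [pow_orderOf_eq_one u, act_one_apply] at h1
    have h2 : ((orderOf u : ℤ) * η lam) • β = 0 := sub_eq_self.mp h1.symm
    rcases smul_eq_zero.mp h2 with h | h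
    · rcases mul_eq_zero.mp h with h | h
      · exfalso
        have := orderOf_pos u
        omega
      · exact h
    · exact absurd h (alpha_ne_zero HC hβ)
  apply C.act_inj
  apply AddEquiv.ext
  intro lam
  show C.act r lam = C.act (C.sref β) lam
  rw [hr_app lam, C.sref_apply β hβ]
  have h3 := hη0 lam
  simp only [hη] at h3
  rw [show C.pair (C.act z lam) α = C.pair lam β by omega]

lemma Ts_Tz_Cw (HC : HeckeCtx C E) {I J : Set C.W} {wJ z : C.W} {α : C.X}
    (hz : z ∈ C.WIJ I J) (hα : α ∈ C.PiI I) (hzα : C.act z⁻¹ α ∈ C.PiI J) :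
    HC.T (C.of (C.sref α)) * (HC.T (C.of z) * HC.Cw J wJ)
      = -(HC.T (C.of z) * HC.Cw J wJ) := by
  set s := C.sref α with hsd
  have hsS : s ∈ C.S := C.S_eq ▸ ⟨α, hα.1, rfl⟩
  have hsI : s ∈ I := hα.2
  set t := C.sref (C.act z⁻¹ α) with htd
  have htS : t ∈ C.S := C.S_eq ▸ ⟨C.act z⁻¹ α, hzα.1, rfl⟩
  have htJ : t ∈ J := hzα.2
  have hconj : s * z = z * t := by
    rw [htd, ← conj_sref HC hα.1 hzα.1]
    group
    rfl
  have hge : C.len z ≤ C.len (s * z) := by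
    apply hz
    exact ⟨s, Subgroup.subset_closure hsI, 1, Subgroup.one_mem _, by rw [mul_one]⟩
  have hup : C.len (s * z) = C.len z + 1 := by
    rcases len_s_mul_or HC z hsS with h | h
    · exact h
    · omega
  have hup2 : C.len (z * t) = C.len z + 1 := by rw [← hconj, hup]
  rw [← mul_assoc, T_s_mul_up HC hsS hup, hconj, ← T_of_mul_of HC z t (by rw [hup2, len_s HC htS]),
    mul_assoc, Ts_mul_Cw HC J wJ htS htJ, mul_neg]

end Conj
section Theta

variable {C : WeylCtx} {E : ExtCtx C}

lemma theta_cancel (HC : HeckeCtx C E) {α : C.X} (hα : α ∈ C.Pi) {h : HC.H}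
    (hmem : h ∈ Submodule.span A (Set.range HC.theta))
    (heq : h * (1 - HC.theta (-α)) = 0) : h = 0 := by
  classical
  obtain ⟨c, hc⟩ := Finsupp.mem_span_range_iff_exists_finsupp.mp hmem
  have hα0 : α ≠ 0 := alpha_ne_zero HC hα
  have hbb : ∀ lam : C.X, HC.theta lam = HC.bB (lam, 1) := by
    intro lam
    rw [HC.bB_eq]
    show HC.theta lam = HC.theta lam * HC.T (C.of 1)
    rw [of_one, HC.T_one, mul_one]
  have hrepr : ∀ mu : C.X, (HC.bB.repr h) (mu, 1) = c mu := by
    intro mu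
    rw [← hc, Finsupp.sum, map_sum, Finsupp.finset_sum_apply]
    have hterm : ∀ i ∈ c.support,
        (HC.bB.repr (c i • HC.theta i)) (mu, 1) = if i = mu then c i else 0 := by
      intro i _
      rw [map_smul, hbb i, Module.Basis.repr_self, Finsupp.smul_apply, Finsupp.single_apply]
      by_cases hi : i = mu
      · simp [hi]
      · simp [hi, Prod.ext_iff]
    rw [Finset.sum_congr rfl hterm, Finset.sum_ite_eq' c.support mu c]
    by_cases hmu : mu ∈ c.support
    · simp [hmu]
    · simp [hmu, Finsupp.notMem_support_iff.mp hmu]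
  have hrepr2 : ∀ mu : C.X, (HC.bB.repr (h * HC.theta (-α))) (mu, 1) = c (mu + α) := by
    intro mu
    have hmul : h * HC.theta (-α) = ∑ i ∈ c.support, c i • HC.theta (i + -α) := by
      rw [← hc, Finsupp.sum, Finset.sum_mul]
      apply Finset.sum_congr rfl; intro i _
      rw [smul_mul_assoc, HC.theta_mul]
    rw [hmul, map_sum, Finsupp.finset_sum_apply]
    have hterm : ∀ i ∈ c.support,
        (HC.bB.repr (c i • HC.theta (i + -α))) (mu, 1) = if i = mu + α then c i else 0 := by
      intro i _
      rw [map_smul, hbb (i + -α), Module.Basis.repr_self, Finsupp.smul_apply, Finsupp.single_apply]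
      have hiff : ((i + -α, (1 : C.W)) = (mu, 1)) ↔ i = mu + α := by
        rw [Prod.ext_iff]
        constructor
        · intro hp
          have h1 : i + -α = mu := hp.1
          rw [← h1]
          exact (neg_add_cancel_right i α).symm
        · intro hp
          refine ⟨?_, rfl⟩
          rw [hp]
          exact add_neg_cancel_right mu α
      by_cases hi : i = mu + α
      · rw [if_pos (hiff.mpr hi), if_pos hi, smul_eq_mul, mul_one]
      · rw [if_neg (fun hcon => hi (hiff.mp hcon)), if_neg hi, smul_eq_mul, mul_zero]
    rw [Finset.sum_congr rfl hterm, Finset.sum_ite_eq' c.support (mu + α) c]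
    by_cases hmu : mu + α ∈ c.support
    · simp [hmu]
    · simp [hmu, Finsupp.notMem_support_iff.mp hmu]
  have hcc : ∀ mu, c mu = c (mu + α) := by
    intro mu
    have h1 : h = h * HC.theta (-α) := by
      have h2 : h * (1 - HC.theta (-α)) = h - h * HC.theta (-α) := by rw [mul_sub, mul_one]
      rw [h2] at heq
      exact sub_eq_zero.mp heq
    rw [← hrepr mu, ← hrepr2 mu, ← h1]
  have hmuzero : ∀ mu, c mu = 0 := by
    intro mu
    by_contra hne
    have hmemn : ∀ n : ℕ, mu + n • α ∈ c.support := by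
      intro n
      induction n with
      | zero =>
        have h0 : mu + (0 : ℕ) • α = mu := by simp
        rw [h0]
        exact Finsupp.mem_support_iff.mpr hne
      | succ n ih =>
        have he : mu + (n + 1) • α = (mu + n • α) + α := by rw [succ_nsmul]; abel
        rw [he, Finsupp.mem_support_iff] at *
        rw [← hcc]
        exact ih
    have hinj : Function.Injective (fun n : ℕ => mu + n • α) := by
      intro a b hab
      simp only [add_right_inj] at hab
      have h4 : (a : ℤ) • α = (b : ℤ) • α := by
        rw [natCast_zsmul, natCast_zsmul]; exact hab
      have h5 := smul_left_injective ℤ hα0 h4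
      exact_mod_cast h5
    have hinf : (↑c.support : Set C.X).Infinite :=
      Set.infinite_of_injective_forall_mem hinj (fun n => hmemn n)
    exact hinf (c.support.finite_toSet)
  have hczero : c = 0 := Finsupp.ext (fun mu => by rw [hmuzero mu, Finsupp.coe_zero, Pi.zero_apply])
  rw [← hc, hczero, Finsupp.sum_zero_index]

lemma bernstein_sum (HC : HeckeCtx C E) {α : C.X} (hα : α ∈ C.Pi) (mu : C.X) (e : ℕ)
    (he : C.pair mu α = (e : ℤ)) :
    HC.theta mu * HC.T (C.of (C.sref α)) =
      HC.T (C.of (C.sref α)) * HC.theta (mu - (e : ℤ) • α)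
      + (v ^ 2 - 1 : A) • ∑ j ∈ Finset.range e, HC.theta (mu - (j : ℤ) • α) := by
  have hs : C.act (C.sref α) mu = mu - (e : ℤ) • α := by rw [C.sref_apply α hα, he]
  set D := HC.theta mu * HC.T (C.of (C.sref α))
    - HC.T (C.of (C.sref α)) * HC.theta (mu - (e : ℤ) • α)
    - (v ^ 2 - 1 : A) • ∑ j ∈ Finset.range e, HC.theta (mu - (j : ℤ) • α) with hD
  have hmem : D ∈ Submodule.span A (Set.range HC.theta) := by
    apply Submodule.sub_mem
    · have hb := HC.bernstein_mem α hα mu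
      rw [hs] at hb
      exact hb
    · apply Submodule.smul_mem
      apply Submodule.sum_mem
      intro j _
      exact Submodule.subset_span ⟨_, rfl⟩
  have htel : (∑ j ∈ Finset.range e, HC.theta (mu - (j : ℤ) • α)) * (1 - HC.theta (-α))
      = HC.theta mu - HC.theta (mu - (e : ℤ) • α) := by
    rw [Finset.sum_mul]
    have hterm : ∀ j ∈ Finset.range e, HC.theta (mu - (j : ℤ) • α) * (1 - HC.theta (-α))
        = HC.theta (mu - (j : ℤ) • α) - HC.theta (mu - ((j + 1 : ℕ) : ℤ) • α) := by
      intro j _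
      rw [mul_sub, mul_one, HC.theta_mul]
      congr 2
      push_cast
      rw [add_smul, one_smul]
      abel
    rw [Finset.sum_congr rfl hterm,
      Finset.sum_range_sub' (fun j => HC.theta (mu - ((j : ℕ) : ℤ) • α)) e]
    congr 2
    simp
  have heq0 : D * (1 - HC.theta (-α)) = 0 := by
    have hb := HC.bernstein α hα mu
    rw [hs] at hb
    rw [hD, sub_mul, hb, smul_mul_assoc, htel, sub_self]
  have hD0 : D = 0 := theta_cancel HC hα hmem heq0
  rw [hD, sub_sub] at hD0
  exact sub_eq_zero.mp hD0

end Theta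

/-- Suppose `z ∈ W^{IJ}`, `α ∈ Π_I` with `z⁻¹(α) ∈ Π_J`, `s = s_α`, and
`d ≥ 0`. Then there are polynomials `p₀, …, p_{⌊d/2⌋} ∈ ℤ[v²]`, depending only on `d`,
such that for every `λ ∈ X` with `⟨λ, α̌⟩ = d`:
`C_{w_I} θ_{s(λ)} T_z C_{w_J} = C_{w_I} (∑_{j=0}^{⌊d/2⌋} p_j θ_{λ−jα}) T_z C_{w_J}`. -/
theorem Cw_theta_dominant_expansion (C : WeylCtx) (E : ExtCtx C) (HC : HeckeCtx C E)
    (I J : Set C.W) (hI : I ⊆ C.S) (hJ : J ⊆ C.S)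
    (wI wJ : C.W) (hwI : C.IsLongest I wI) (hwJ : C.IsLongest J wJ)
    (z : C.W) (hz : z ∈ C.WIJ I J)
    (α : C.X) (hα : α ∈ C.PiI I) (hzα : C.act z⁻¹ α ∈ C.PiI J) (d : ℕ) :
    ∃ p : ℕ → Polynomial ℤ, ∀ lam : C.X, C.pair lam α = (d : ℤ) →
      HC.Cw I wI * HC.theta (C.act (C.sref α) lam) * HC.T (C.of z) * HC.Cw J wJ =
        HC.Cw I wI *
          (∑ j ∈ Finset.range (d / 2 + 1),
            (Polynomial.aeval (v ^ 2 : A) (p j)) • HC.theta (lam - (j : ℤ) • α)) *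
          HC.T (C.of z) * HC.Cw J wJ := by
  classical
  have hαPi : α ∈ C.Pi := hα.1
  have hsS : C.sref α ∈ C.S := C.S_eq ▸ ⟨α, hαPi, rfl⟩
  have hsI : C.sref α ∈ I := hα.2
  set g : C.X → HC.H := fun mu => HC.Cw I wI * HC.theta mu * HC.T (C.of z) * HC.Cw J wJ
    with hg
  set Y : HC.H := HC.T (C.of z) * HC.Cw J wJ with hY
  have hgr : ∀ mu, g mu = HC.Cw I wI * (HC.theta mu * Y) := by
    intro mu
    simp only [hg, hY]
    rw [mul_assoc, mul_assoc]
  have hTs : HC.T (C.of (C.sref α)) * Y = -Y := Ts_Tz_Cw HC hz hα hzα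
  have hCwTs : HC.Cw I wI * HC.T (C.of (C.sref α)) = -(HC.Cw I wI) :=
    Cw_mul_Ts HC I wI hsS hsI
  have key : ∀ (mu : C.X) (e : ℕ), C.pair mu α = (e : ℤ) →
      g (mu - (e : ℤ) • α)
        = g mu + (v ^ 2 - 1 : A) • ∑ j ∈ Finset.range e, g (mu - (j : ℤ) • α) := by
    intro mu e he
    have hb := bernstein_sum HC hαPi mu e he
    have h1 := congrArg (fun x => HC.Cw I wI * (x * Y)) hb
    have hL : HC.Cw I wI * (HC.theta mu * HC.T (C.of (C.sref α)) * Y) = -(g mu) := by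
      rw [mul_assoc (HC.theta mu), hTs, mul_neg, mul_neg, ← hgr]
    have hR1 : HC.Cw I wI * (HC.T (C.of (C.sref α)) * HC.theta (mu - (e : ℤ) • α) * Y)
        = -(g (mu - (e : ℤ) • α)) := by
      rw [mul_assoc (HC.T (C.of (C.sref α))), ← mul_assoc (HC.Cw I wI), hCwTs, neg_mul,
        ← hgr]
    have hR2 : HC.Cw I wI * (((v ^ 2 - 1 : A) • ∑ j ∈ Finset.range e,
          HC.theta (mu - (j : ℤ) • α)) * Y)
        = (v ^ 2 - 1 : A) • ∑ j ∈ Finset.range e, g (mu - (j : ℤ) • α) := by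
      rw [smul_mul_assoc, mul_smul_comm]
      congr 1
      rw [Finset.sum_mul, Finset.mul_sum]
      apply Finset.sum_congr rfl
      intro j _
      exact (hgr _).symm
    rw [hL, add_mul, mul_add, hR1, hR2] at h1
    have h2 : -(g (mu - (e : ℤ) • α))
        = -(g mu) - (v ^ 2 - 1 : A) • ∑ j ∈ Finset.range e, g (mu - (j : ℤ) • α) := by
      rw [h1]; abel
    rw [← neg_inj, h2, neg_add]
    abel
  have hpair_shift : ∀ (mu : C.X) (k : ℕ),
      C.pair (mu - (k : ℤ) • α) α = C.pair mu α - 2 * k := by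
    intro mu k
    rw [pair_sub HC hαPi, pair_zsmul HC hαPi, pair_self HC hαPi]
    ring
  have main : ∀ d : ℕ, ∃ p : ℕ → Polynomial ℤ, ∀ mu : C.X, C.pair mu α = (d : ℤ) →
      g (mu - (d : ℤ) • α) = ∑ j ∈ Finset.range (d / 2 + 1),
        (Polynomial.aeval (v ^ 2 : A) (p j)) • g (mu - (j : ℤ) • α) := by
    intro d
    induction d using Nat.strong_induction_on with
    | _ d IH =>
    rcases Nat.eq_zero_or_pos d with hd0 | hdpos
    · subst hd0
      refine ⟨fun _ => 1, ?_⟩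
      intro mu _
      rw [Finset.range_one, Finset.sum_singleton]
      norm_num
    · have htd : d / 2 + 1 ≤ d := by omega
      have hIH : ∀ j : ℕ, ∃ q : ℕ → Polynomial ℤ, j ∈ Finset.Ico (d / 2 + 1) d →
          ∀ mu : C.X, C.pair mu α = (d : ℤ) →
            g (mu - (j : ℤ) • α) = ∑ i ∈ Finset.range (d / 2 + 1),
              (Polynomial.aeval (v ^ 2 : A) (q i)) • g (mu - (i : ℤ) • α) := by
        intro j
        by_cases hj : j ∈ Finset.Ico (d / 2 + 1) d
        case neg => exact ⟨fun _ => 0, fun h => absurd h hj⟩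
        case pos =>
        have hjt := Finset.mem_Ico.mp hj
        obtain ⟨hj1, hj2⟩ := hjt
        set k := d - j with hk
        set d' := 2 * j - d with hd'
        have hd'lt : d' < d := by omega
        obtain ⟨q', hq'⟩ := IH d' hd'lt
        refine ⟨fun i => if k ≤ i then q' (i - k) else 0, fun _ => ?_⟩
        intro mu hmu
        have hnu : C.pair (mu - (k : ℤ) • α) α = (d' : ℤ) := by
          rw [hpair_shift, hmu]
          have : 2 * k ≤ d := by omega
          push_cast
          omega
        have h5 := hq' (mu - (k : ℤ) • α) hnu
        have h6 : mu - (k : ℤ) • α - (d' : ℤ) • α = mu - (j : ℤ) • α := by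
          rw [sub_sub, ← add_smul]
          have hkd : (k : ℤ) + (d' : ℤ) = (j : ℤ) := by push_cast; omega
          rw [hkd]
        rw [h6] at h5
        rw [h5]
        have hsub : Finset.Ico k (d / 2 + 1) ⊆ Finset.range (d / 2 + 1) := by
          intro x hx
          rw [Finset.mem_range]
          exact (Finset.mem_Ico.mp hx).2
        have hzero' : ∀ x ∈ Finset.range (d / 2 + 1), x ∉ Finset.Ico k (d / 2 + 1) →
            (Polynomial.aeval (v ^ 2 : A) (if k ≤ x then q' (x - k) else 0))
              • g (mu - (x : ℤ) • α) = 0 := by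
          intro x hx hnx
          rw [Finset.mem_range] at hx
          rw [Finset.mem_Ico] at hnx
          have hxk : ¬ (k ≤ x) := by omega
          rw [if_neg hxk, map_zero, zero_smul]
        rw [← Finset.sum_subset hsub hzero']
        rw [Finset.sum_Ico_eq_sum_range]
        have hd2 : d / 2 + 1 - k = d' / 2 + 1 := by omega
        rw [hd2]
        apply Finset.sum_congr rfl
        intro i hi
        have hik : k ≤ k + i := Nat.le_add_right k i
        rw [if_pos hik]
        have h8 : k + i - k = i := by omega
        rw [h8]
        congr 1
        have h9 : mu - ((k + i : ℕ) : ℤ) • α = mu - (k : ℤ) • α - (i : ℤ) • α := by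
          rw [sub_sub, ← add_smul]
          push_cast
          ring_nf
        rw [h9]
      choose q hq using hIH
      refine ⟨fun m => (if m = 0 then 1 else 0) + (Polynomial.X - 1) *
        (1 + ∑ j ∈ Finset.Ico (d / 2 + 1) d, q j m), ?_⟩
      intro mu hmu
      have hkey := key mu d hmu
      have hsplit : ∑ j ∈ Finset.range d, g (mu - (j : ℤ) • α)
          = ∑ j ∈ Finset.range (d / 2 + 1), g (mu - (j : ℤ) • α)
            + ∑ j ∈ Finset.Ico (d / 2 + 1) d, g (mu - (j : ℤ) • α) := by
        rw [Finset.range_eq_Ico, Finset.range_eq_Ico]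
        exact (Finset.sum_Ico_consecutive _ (Nat.zero_le (d / 2 + 1)) htd).symm
      have hexp : ∀ m ∈ Finset.range (d / 2 + 1),
          (Polynomial.aeval (v ^ 2 : A) ((if m = 0 then 1 else 0) + (Polynomial.X - 1) *
            (1 + ∑ j ∈ Finset.Ico (d / 2 + 1) d, q j m))) • g (mu - (m : ℤ) • α)
          = (if m = 0 then g (mu - ((0 : ℕ) : ℤ) • α) else 0)
            + (v ^ 2 - 1 : A) • (g (mu - (m : ℤ) • α)
              + ∑ j ∈ Finset.Ico (d / 2 + 1) d,
                  (Polynomial.aeval (v ^ 2 : A) (q j m)) • g (mu - (m : ℤ) • α)) := by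
        intro m _
        rw [map_add, map_mul, map_sub, Polynomial.aeval_X, map_one, add_smul, mul_smul]
        congr 1
        · by_cases hm : m = 0 <;> simp [hm]
        · congr 1
          rw [map_add, map_one, add_smul, one_smul, map_sum, Finset.sum_smul]
      rw [Finset.sum_congr rfl hexp, Finset.sum_add_distrib]
      have hfirst : ∑ m ∈ Finset.range (d / 2 + 1),
          (if m = 0 then g (mu - ((0 : ℕ) : ℤ) • α) else 0) = g mu := by
        rw [Finset.sum_ite_eq' (Finset.range (d / 2 + 1)) 0
          (fun _ => g (mu - ((0 : ℕ) : ℤ) • α))]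
        rw [if_pos (Finset.mem_range.mpr (by omega))]
        congr 1
        simp
      rw [hfirst, ← Finset.smul_sum, Finset.sum_add_distrib]
      have hswap : ∑ m ∈ Finset.range (d / 2 + 1), ∑ j ∈ Finset.Ico (d / 2 + 1) d,
            (Polynomial.aeval (v ^ 2 : A) (q j m)) • g (mu - (m : ℤ) • α)
          = ∑ j ∈ Finset.Ico (d / 2 + 1) d, g (mu - (j : ℤ) • α) := by
        rw [Finset.sum_comm]
        apply Finset.sum_congr rfl
        intro j hj
        exact (hq j hj mu hmu).symm
      rw [hswap, ← hsplit]
      exact hkey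
  obtain ⟨p, hp⟩ := main d
  refine ⟨p, ?_⟩
  intro lam hlam
  have hslam : C.act (C.sref α) lam = lam - (d : ℤ) • α := by
    rw [C.sref_apply α hαPi, hlam]
  rw [hslam]
  have h7 := hp lam hlam
  show g (lam - (d : ℤ) • α) = _
  rw [h7]
  rw [Finset.mul_sum, Finset.sum_mul, Finset.sum_mul]
  apply Finset.sum_congr rfl
  intro j _
  rw [mul_smul_comm, smul_mul_assoc, smul_mul_assoc]
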